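/- Let ψ : (α,β) → (0,∞) be a second continuous function, with associated spaces C_ψ^{(∞)} defined using Y := ψ∂_t. If the quotient φ/ψ extends to a function on [α,β] belonging to C_ψ^{(∞)}, then C_ψ^{(∞)} ⊂ C_φ^{(∞)}. -/

import Mathlib

open Real Set Filter Topology

/-- The open interval `(α, β)` of real numbers, where `α β` are extended reals. -/
def EI (α β : EReal) : Set ℝ := {x : ℝ | α < (x : EReal) ∧ (x : EReal) < β}

/-- `u : ℝ → ℝ` (thought of as a function on `(α, β)`) extends to a continuous
function on `[α, β] ⊆ EReal`. -/
def ContExt (α β : EReal) (u : ℝ → ℝ) : Prop :=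
  ∃ g : EReal → ℝ, ContinuousOn g (Set.Icc α β) ∧
    ∀ x : ℝ, x ∈ EI α β → g (x : EReal) = u x

/-- The operator `X u := φ · u′`. -/
noncomputable def Xop (φ u : ℝ → ℝ) : ℝ → ℝ := fun x => φ x * deriv u x

/-- The iterates `X^k u`. -/
noncomputable def Xiter (φ : ℝ → ℝ) : ℕ → (ℝ → ℝ) → (ℝ → ℝ)
  | 0, u => u
  | n + 1, u => Xop φ (Xiter φ n u)

/-- The space `C_φ^{(n)}`: inductively, `C_φ^{(0)}` consists of the functions having a
continuous extension to `[α, β]`, and `u ∈ C_φ^{(n+1)}` iff `u ∈ C_φ^{(n)}`, `X^n u` is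
differentiable on `(α, β)`, and `X^{n+1} u` extends to a continuous function on `[α, β]`. -/
def CN (α β : EReal) (φ : ℝ → ℝ) : ℕ → Set (ℝ → ℝ)
  | 0 => {u | ContExt α β u}
  | n + 1 => {u | u ∈ CN α β φ n ∧
      (∀ x ∈ EI α β, DifferentiableAt ℝ (Xiter φ n u) x) ∧
      ContExt α β (Xiter φ (n + 1) u)}

/-- The space `C_φ^{(∞)} := ⋂ₙ C_φ^{(n)}`. -/
def Cinf (α β : EReal) (φ : ℝ → ℝ) : Set (ℝ → ℝ) := ⋂ n : ℕ, CN α β φ n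

/-- The spaces `C_φ^{(n)}` for `n ∈ ℤ₊ ∪ {∞}`. -/
def CNE (α β : EReal) (φ : ℝ → ℝ) (n : ℕ∞) : Set (ℝ → ℝ) :=
  WithTop.recTopCoe (Cinf α β φ) (fun k => CN α β φ k) n


/-! Since `φ = q ψ` on `(α, β)`, we have `X = q · Y`. The space `C_ψ^{(∞)}` is an algebra
(by the Leibniz rule `Y (u v) = (Y u) v + u (Y v)`) which is stable under `Y`, so `X` maps it
into itself, and every `X^n u` with `u ∈ C_ψ^{(∞)}` stays in `C_ψ^{(∞)}`. -/

lemma isOpen_EI (α β : EReal) : IsOpen (EI α β) :=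
  (isOpen_Ioi.inter isOpen_Iio).preimage continuous_coe_real_ereal

section

variable {α β : EReal} {φ u v : ℝ → ℝ}

lemma ContExt.congr (h : ContExt α β u) (huv : EqOn u v (EI α β)) : ContExt α β v := by
  obtain ⟨g, hg, hgu⟩ := h
  exact ⟨g, hg, fun x hx => (hgu x hx).trans (huv hx)⟩

lemma ContExt.add (hu : ContExt α β u) (hv : ContExt α β v) : ContExt α β (u + v) := by
  obtain ⟨g, hg, hgu⟩ := hu
  obtain ⟨g', hg', hgv⟩ := hv
  exact ⟨g + g', hg.add hg', fun x hx => by simp [hgu x hx, hgv x hx]⟩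

lemma ContExt.mul (hu : ContExt α β u) (hv : ContExt α β v) : ContExt α β (u * v) := by
  obtain ⟨g, hg, hgu⟩ := hu
  obtain ⟨g', hg', hgv⟩ := hv
  exact ⟨g * g', hg.mul hg', fun x hx => by simp [hgu x hx, hgv x hx]⟩

lemma Xop_congr (huv : EqOn u v (EI α β)) : EqOn (Xop φ u) (Xop φ v) (EI α β) := fun x hx => by
  have hev : u =ᶠ[𝓝 x] v := eventuallyEq_of_mem ((isOpen_EI α β).mem_nhds hx) huv
  simp only [Xop, hev.deriv_eq]

lemma Xop_add {x : ℝ} (hu : DifferentiableAt ℝ u x) (hv : DifferentiableAt ℝ v x) :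
    Xop φ (u + v) x = (Xop φ u + Xop φ v) x := by
  simp only [Xop, Pi.add_apply, deriv_add hu hv]
  ring

lemma Xop_mul {x : ℝ} (hu : DifferentiableAt ℝ u x) (hv : DifferentiableAt ℝ v x) :
    Xop φ (u * v) x = (Xop φ u * v + u * Xop φ v) x := by
  simp only [Xop, Pi.add_apply, Pi.mul_apply, deriv_mul hu hv]
  ring

lemma Xiter_succ' (n : ℕ) : Xiter φ (n + 1) u = Xiter φ n (Xop φ u) := by
  induction n with
  | zero => rfl
  | succ n ih => exact congrArg (Xop φ) ih

lemma mem_CN_succ_iff {n : ℕ} :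
    u ∈ CN α β φ (n + 1) ↔
      ContExt α β u ∧ (∀ x ∈ EI α β, DifferentiableAt ℝ u x) ∧ Xop φ u ∈ CN α β φ n := by
  induction n generalizing u with
  | zero => exact Iff.rfl
  | succ n ih =>
    constructor
    · rintro ⟨hu, hdiff, hcont⟩
      obtain ⟨hu0, hd, hX⟩ := ih.1 hu
      refine ⟨hu0, hd, hX, ?_, ?_⟩
      · rwa [← Xiter_succ']
      · rwa [← Xiter_succ']
    · rintro ⟨hu0, hd, hX, hdiff, hcont⟩
      refine ⟨ih.2 ⟨hu0, hd, hX⟩, ?_, ?_⟩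
      · rwa [Xiter_succ']
      · rwa [Xiter_succ']

lemma mem_Cinf_iff :
    u ∈ Cinf α β φ ↔
      ContExt α β u ∧ (∀ x ∈ EI α β, DifferentiableAt ℝ u x) ∧ Xop φ u ∈ Cinf α β φ := by
  simp only [Cinf, mem_iInter]
  constructor
  · intro h
    exact ⟨h 0, (mem_CN_succ_iff.1 (h 1)).2.1, fun n => (mem_CN_succ_iff.1 (h (n + 1))).2.2⟩
  · rintro ⟨hu, hd, hX⟩ (_ | n)
    · exact hu
    · exact mem_CN_succ_iff.2 ⟨hu, hd, hX n⟩

lemma mem_CN_of_eqOn {n : ℕ} (hu : u ∈ CN α β φ n) (huv : EqOn u v (EI α β)) :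
    v ∈ CN α β φ n := by
  induction n generalizing u v with
  | zero => exact ContExt.congr hu huv
  | succ n ih =>
    obtain ⟨hu0, hd, hX⟩ := mem_CN_succ_iff.1 hu
    refine mem_CN_succ_iff.2 ⟨hu0.congr huv, fun x hx => ?_, ih hX (Xop_congr huv)⟩
    exact (hd x hx).congr_of_eventuallyEq
      (eventuallyEq_of_mem ((isOpen_EI α β).mem_nhds hx) huv.symm)

lemma add_mem_CN {n : ℕ} (hu : u ∈ CN α β φ n) (hv : v ∈ CN α β φ n) :
    u + v ∈ CN α β φ n := by
  induction n generalizing u v with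
  | zero => exact ContExt.add hu hv
  | succ n ih =>
    obtain ⟨hu0, hud, huX⟩ := mem_CN_succ_iff.1 hu
    obtain ⟨hv0, hvd, hvX⟩ := mem_CN_succ_iff.1 hv
    refine mem_CN_succ_iff.2 ⟨hu0.add hv0, fun x hx => (hud x hx).add (hvd x hx), ?_⟩
    exact mem_CN_of_eqOn (ih huX hvX) fun x hx => (Xop_add (hud x hx) (hvd x hx)).symm

lemma mul_mem_CN {n : ℕ} (hu : u ∈ Cinf α β φ) (hv : v ∈ Cinf α β φ) :
    u * v ∈ CN α β φ n := by
  induction n generalizing u v with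
  | zero => exact ContExt.mul (mem_Cinf_iff.1 hu).1 (mem_Cinf_iff.1 hv).1
  | succ n ih =>
    obtain ⟨hu0, hud, huX⟩ := mem_Cinf_iff.1 hu
    obtain ⟨hv0, hvd, hvX⟩ := mem_Cinf_iff.1 hv
    refine mem_CN_succ_iff.2 ⟨hu0.mul hv0, fun x hx => (hud x hx).mul (hvd x hx), ?_⟩
    exact mem_CN_of_eqOn (add_mem_CN (ih huX hv) (ih hu hvX))
      fun x hx => (Xop_mul (hud x hx) (hvd x hx)).symm

lemma mul_mem_Cinf (hu : u ∈ Cinf α β φ) (hv : v ∈ Cinf α β φ) : u * v ∈ Cinf α β φ :=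
  mem_iInter.2 fun _ => mul_mem_CN hu hv

end

theorem Cpsi_subset_Cphi_general (α β : EReal) (φ : ℝ → ℝ)
    (ψ : ℝ → ℝ) (hψpos : ∀ x ∈ EI α β, 0 < ψ x)
    (q : ℝ → ℝ) (hq : ∀ x ∈ EI α β, q x = φ x / ψ x) (hqmem : q ∈ Cinf α β ψ) :
    Cinf α β ψ ⊆ Cinf α β φ := by
  have hX : ∀ u, EqOn (Xop φ u) (q * Xop ψ u) (EI α β) := fun u x hx => by
    simp only [Xop, Pi.mul_apply, hq x hx]
    field_simp [(hψpos x hx).ne']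
  suffices h : ∀ n : ℕ, ∀ u ∈ Cinf α β ψ, u ∈ CN α β φ n from
    fun u hu => mem_iInter.2 fun n => h n u hu
  intro n
  induction n with
  | zero => exact fun u hu => (mem_Cinf_iff.1 hu).1
  | succ n ih =>
    intro u hu
    obtain ⟨hu0, hud, huY⟩ := mem_Cinf_iff.1 hu
    exact mem_CN_succ_iff.2
      ⟨hu0, hud, mem_CN_of_eqOn (ih _ (mul_mem_Cinf hqmem huY)) (hX u).symm⟩

/-- if `ψ : (α,β) → (0,∞)` is continuous and `φ/ψ` extends to a function on
`[α,β]` belonging to `C_ψ^{(∞)}`, then `C_ψ^{(∞)} ⊆ C_φ^{(∞)}`. -/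
theorem Cpsi_subset_Cphi (α β : EReal) (hαβ : α < β) (φ : ℝ → ℝ)
    (hφc : ContinuousOn φ (EI α β)) (hφpos : ∀ x ∈ EI α β, 0 < φ x)
    (ψ : ℝ → ℝ) (hψc : ContinuousOn ψ (EI α β)) (hψpos : ∀ x ∈ EI α β, 0 < ψ x)
    (q : ℝ → ℝ) (hq : ∀ x ∈ EI α β, q x = φ x / ψ x) (hqmem : q ∈ Cinf α β ψ) :
    Cinf α β ψ ⊆ Cinf α β φ :=
  Cpsi_subset_Cphi_general α β φ ψ hψpos q hq hqmem
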